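/- arXiv:1908.00092 — 2 statements merged into one kernel-verified Lean document; each statement's English description precedes it below -/
import Mathlib

section
/- Let F be an r-graph with at least one hyperedge and let H be a hypergraph. If the r-shadow Γ^(r)(H) contains a copy of F such that every r-edge of this copy is contained in at least |E(F)| hyperedges of H, then H contains a subhypergraph that is a Berge copy of F. -/
/-! Choosing for every edge `e` of the copy a hyperedge of `H` containing `e`, distinct for distinct
edges, is a system of distinct representatives; it exists by Hall's theorem, whose condition holds
because each single candidate set already has at least `|E(F)|` elements. -/

open Finset

/-- `H` contains (a subhypergraph which is) a Berge copy of `F`. -/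
def ContainsBerge {α β : Type*} [DecidableEq α] [DecidableEq β]
    (F : Finset (Finset α)) (H : Finset (Finset β)) : Prop :=
  ∃ (φ : α → β) (f : Finset α → Finset β),
    Function.Injective φ ∧ Set.InjOn f (F : Set (Finset α)) ∧
    (∀ e ∈ F, f e ∈ H) ∧ (∀ e ∈ F, e.image φ ⊆ f e)

/-- `G` contains a subhypergraph isomorphic to `F`. -/
def CopyIn {α β : Type*} [DecidableEq α] [DecidableEq β]
    (F : Finset (Finset α)) (G : Finset (Finset β)) : Prop :=
  ∃ φ : α → β, Function.Injective φ ∧ ∀ e ∈ F, e.image φ ∈ G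

noncomputable def exBerge {α : Type*} [DecidableEq α] (r n : ℕ) (F : Finset (Finset α)) : ℕ :=
  sSup {m | ∃ H : Finset (Finset (Fin n)),
    (∀ e ∈ H, e.card = r) ∧ ¬ ContainsBerge F H ∧ H.card = m}

noncomputable def exForb {α : Type*} [DecidableEq α] (r n : ℕ) (F : Finset (Finset α)) : ℕ :=
  sSup {m | ∃ H : Finset (Finset (Fin n)),
    (∀ e ∈ H, e.card = r) ∧ ¬ CopyIn F H ∧ H.card = m}

/-- number of `r`-sets of vertices all of whose `k`-subsets are edges of `G`,
i.e. the number of copies of the complete `k`-graph on `r` vertices in `G`. -/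
def cliqueCount (k r : ℕ) {n : ℕ} (G : Finset (Finset (Fin n))) : ℕ :=
  (((Finset.univ : Finset (Fin n)).powersetCard r).filter
    (fun S => ∀ e ∈ S.powersetCard k, e ∈ G)).card

noncomputable def exGenClique {α : Type*} [DecidableEq α] (k r n : ℕ)
    (F : Finset (Finset α)) : ℕ :=
  sSup {m | ∃ G : Finset (Finset (Fin n)),
    (∀ e ∈ G, e.card = k) ∧ ¬ CopyIn F G ∧ cliqueCount k r G = m}

/-- `k ≥ R^(r)(F,F)`: every 2-coloring of the `r`-subsets of a `k`-set has a
monochromatic copy of `F`. -/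
def RamseyProp {α : Type*} [DecidableEq α] (k r : ℕ) (F : Finset (Finset α)) : Prop :=
  ∀ χ : Finset (Fin k) → Bool, ∃ c : Bool,
    CopyIn F (((Finset.univ : Finset (Fin k)).powersetCard r).filter (fun e => χ e = c))

def rShadow {β : Type*} [DecidableEq β] (r : ℕ) (H : Finset (Finset β)) : Finset (Finset β) :=
  H.biUnion (fun h => h.powersetCard r)

/-- the `k`-uniform expansion of a graph: add `k-2` new distinct vertices to each edge. -/
def expansion {α : Type*} [DecidableEq α] (k : ℕ) (F0 : Finset (Finset α)) :
    Finset (Finset (α ⊕ Finset α × Fin (k - 2))) :=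
  F0.image (fun e =>
    e.image Sum.inl ∪ (Finset.univ : Finset (Fin (k - 2))).image (fun i => Sum.inr (e, i)))

/-- Turán hypergraph `T^r(n,q)`: partition `Fin n` into `q` parts (residues mod `q`),
edges are the `r`-sets meeting every part at most once. -/
def turanEdges (r n q : ℕ) : Finset (Finset (Fin n)) :=
  ((Finset.univ : Finset (Fin n)).powersetCard r).filter
    (fun S => ∀ u ∈ S, ∀ v ∈ S, (u : ℕ) % q = (v : ℕ) % q → u = v)

def Colorable2 {α : Type*} (F0 : Finset (Finset α)) (t : ℕ) : Prop :=
  ∃ c : α → Fin t, ∀ e ∈ F0, ∀ u ∈ e, ∀ v ∈ e, u ≠ v → c u ≠ c v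

/-- number of subhypergraphs of `G` isomorphic to `F`. -/
def copyCount {α β : Type*} [Fintype α] [DecidableEq α] [Fintype β] [DecidableEq β]
    (F : Finset (Finset α)) (G : Finset (Finset β)) : ℕ :=
  (G.powerset.filter (fun G' => ∃ φ : α → β, Function.Injective φ ∧
      G' = F.image (fun e => e.image φ))).card

theorem Finset.exists_injective_mem_of_card_le {ι κ : Type*} [Fintype ι] [DecidableEq κ]
    (t : ι → Finset κ) (ht : ∀ i, Fintype.card ι ≤ (t i).card) :
    ∃ f : ι → κ, Function.Injective f ∧ ∀ i, f i ∈ t i := by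
  refine (Finset.all_card_le_biUnion_card_iff_existsInjective' t).1 fun s => ?_
  rcases s.eq_empty_or_nonempty with rfl | ⟨i, hi⟩
  · simp
  · calc s.card ≤ Fintype.card ι := s.card_le_univ
      _ ≤ (t i).card := ht i
      _ ≤ (s.biUnion t).card := card_le_card (subset_biUnion_of_mem t hi)

theorem Finset.exists_injOn_mem_of_card_le {ι κ : Type*} [DecidableEq κ] [Nonempty κ]
    (s : Finset ι) (t : ι → Finset κ) (ht : ∀ i ∈ s, s.card ≤ (t i).card) :
    ∃ f : ι → κ, Set.InjOn f s ∧ ∀ i ∈ s, f i ∈ t i := by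
  classical
  obtain ⟨g, hg, hgt⟩ := Finset.exists_injective_mem_of_card_le (fun i : s => t i)
    (fun i => (Fintype.card_coe s).trans_le (ht i i.2))
  refine ⟨fun i => if hi : i ∈ s then g ⟨i, hi⟩ else Classical.arbitrary κ, ?_, ?_⟩
  · intro i hi j hj hij
    simp only [dif_pos (mem_coe.1 hi), dif_pos (mem_coe.1 hj)] at hij
    exact congrArg Subtype.val (hg hij)
  · intro i hi
    simpa [dif_pos hi] using hgt ⟨i, hi⟩

theorem statement13_general {α β : Type*} [DecidableEq α] [DecidableEq β] (r : ℕ)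
    (F : Finset (Finset α))
    (H : Finset (Finset β))
    (hcopy : ∃ φ : α → β, Function.Injective φ ∧
      (∀ e ∈ F, e.image φ ∈ rShadow r H) ∧
      (∀ e ∈ F, F.card ≤ (H.filter (fun h => e.image φ ⊆ h)).card)) :
    ContainsBerge F H := by
  obtain ⟨φ, hφ, -, hcard⟩ := hcopy
  obtain ⟨f, hf, hfH⟩ := F.exists_injOn_mem_of_card_le (fun e => H.filter (e.image φ ⊆ ·)) hcard
  exact ⟨φ, f, hφ, hf, fun e he => (mem_filter.1 (hfH e he)).1,
    fun e he => (mem_filter.1 (hfH e he)).2⟩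

theorem statement13 {α β : Type*} [DecidableEq α] [DecidableEq β] (r : ℕ)
    (F : Finset (Finset α)) (hF : ∀ e ∈ F, e.card = r) (hFne : F.Nonempty)
    (H : Finset (Finset β))
    (hcopy : ∃ φ : α → β, Function.Injective φ ∧
      (∀ e ∈ F, e.image φ ∈ rShadow r H) ∧
      (∀ e ∈ F, F.card ≤ (H.filter (fun h => e.image φ ⊆ h)).card)) :
    ContainsBerge F H :=
  statement13_general r F H hcopy
end

section
/- Let r ≥ 2 and let F be an r-graph. For every ε > 0 there exist δ > 0 and N such that for every n ≥ N and every Berge-F-free hypergraph H on n vertices whose hyperedges all have size at least |V(F)| and at most δ·n, the number of copies of F in the r-shadow Γ^(r)(H) is at most ε · n^{|V(F)|}. -/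
/-!
Let `φ` be a copy of `F` in the shadow: each `φ e` lies in some hyperedge. As `H` is
Berge-`F`-free these hyperedges cannot be chosen distinct, so some hyperedge contains `φ e₁` and
`φ e₂` for distinct edges `e₁, e₂`, hence the image of an `(r+1)`-subset of `e₁ ∪ e₂`. Thus there
are `O(n^(k-r-1) · |Γ^(r+1)(H)|)` copies, where `k = |V(F)|`.

To bound the `(r+1)`-shadow, note that every `k`-set contains an `r`-set lying in fewer than `|F|`
hyperedges (otherwise Hall's theorem embeds a Berge-`F` on it). Averaging over the `k`-subsets of
a hyperedge `h`, at least a `1/C(k,r)` fraction of its `r`-subsets are of this kind, and double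
counting gives `∑_h C(|h|, r) ≤ C(k,r) |F| n^r`. Since `C(|h|, r+1) ≤ |h| C(|h|, r)` and
`|h| ≤ δ n`, the `(r+1)`-shadow has at most `δ C(k,r) |F| n^(r+1)` members.
-/

open Finset

theorem mem_rShadow {β : Type*} [DecidableEq β] {r : ℕ} {H : Finset (Finset β)}
    {T : Finset β} : T ∈ rShadow r H ↔ ∃ h ∈ H, T ⊆ h ∧ #T = r := by
  simp [rShadow]

theorem card_rShadow_le {β : Type*} [DecidableEq β] (r : ℕ) (H : Finset (Finset β)) :
    #(rShadow r H) ≤ ∑ h ∈ H, (#h).choose r :=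
  card_biUnion_le.trans_eq (sum_congr rfl fun h _ => card_powersetCard r h)

theorem succ_le_card_union_of_ne {α : Type*} [DecidableEq α] {r : ℕ} {s t : Finset α}
    (hs : #s = r) (ht : #t = r) (hne : s ≠ t) : r + 1 ≤ #(s ∪ t) := by
  have hts : ¬ t ⊆ s := fun hts => hne (eq_of_subset_of_card_le hts (by omega)).symm
  exact hs ▸ card_lt_card (ssubset_of_subset_of_ne subset_union_left
    fun h => hts (h ▸ subset_union_right))

theorem choose_succ_le_mul_choose (a r : ℕ) : a.choose (r + 1) ≤ a * a.choose r :=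
  calc a.choose (r + 1) ≤ a.choose (r + 1) * (r + 1) := Nat.le_mul_of_pos_right _ r.succ_pos
    _ = a.choose r * (a - r) := Nat.choose_succ_right_eq a r
    _ ≤ a * a.choose r := by rw [mul_comm]; gcongr; omega

theorem choose_le_choose_mul_card_filter {β : Type*} [DecidableEq β] {r k : ℕ} {s : Finset β}
    (hks : k ≤ #s) (P : Finset β → Prop) [DecidablePred P]
    (hP : ∀ K ⊆ s, #K = k → ∃ g ⊆ K, #g = r ∧ P g) :
    (#s).choose r ≤ k.choose r * #{g ∈ s.powersetCard r | P g} := by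
  obtain ⟨K₀, hK₀s, hK₀⟩ := exists_subset_card_eq hks
  obtain ⟨g₀, hg₀, rfl, -⟩ := hP K₀ hK₀s hK₀
  have hrk : #g₀ ≤ k := hK₀ ▸ card_le_card hg₀
  set c := (#s - #g₀).choose (k - #g₀)
  have hcover : #(s.powersetCard k) * 1 ≤ #{g ∈ s.powersetCard #g₀ | P g} * c :=
    card_mul_le_card_mul (fun K g => g ⊆ K)
      (fun K hK => by
        obtain ⟨hKs, hK⟩ := mem_powersetCard.1 hK
        obtain ⟨g, hgK, hg, hPg⟩ := hP K hKs hK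
        exact card_pos.2 ⟨g, (mem_bipartiteAbove _).2
          ⟨mem_filter.2 ⟨mem_powersetCard.2 ⟨hgK.trans hKs, hg⟩, hPg⟩, hgK⟩⟩)
      (fun g hg => by
        obtain ⟨hgs, hg⟩ := mem_powersetCard.1 (mem_filter.1 hg).1
        rw [bipartiteBelow, card_filter_powersetCard_subset g s k hgs (hg ▸ hrk), hg])
  refine Nat.le_of_mul_le_mul_right (c := c) ?_ (Nat.choose_pos (by omega))
  calc (#s).choose #g₀ * c = (#s).choose k * k.choose #g₀ := (Nat.choose_mul hrk).symm
    _ ≤ #{g ∈ s.powersetCard #g₀ | P g} * c * k.choose #g₀ := by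
        gcongr
        simpa using hcover
    _ = _ := by ring

section Berge

variable {α β : Type*} [DecidableEq α] [DecidableEq β] {F : Finset (Finset α)}
  {H : Finset (Finset β)}

theorem containsBerge_of_injective {φ : α → β} (hφ : Function.Injective φ) (f : F → Finset β)
    (hf : Function.Injective f) (hfH : ∀ e, f e ∈ H) (hφf : ∀ e : F, (e : Finset α).image φ ⊆ f e) :
    ContainsBerge F H := by
  refine ⟨φ, fun e => if he : e ∈ F then f ⟨e, he⟩ else ∅, hφ, fun e₁ he₁ e₂ he₂ h => ?_,
    fun e he => ?_, fun e he => ?_⟩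
  · simp only [mem_coe] at he₁ he₂
    simp only [dif_pos he₁, dif_pos he₂] at h
    exact congrArg Subtype.val (hf h)
  · simpa [dif_pos he] using hfH ⟨e, he⟩
  · simpa [dif_pos he] using hφf ⟨e, he⟩

theorem containsBerge_of_card_le {φ : α → β} (hφ : Function.Injective φ)
    (hdeg : ∀ e ∈ F, #F ≤ #{h ∈ H | e.image φ ⊆ h}) : ContainsBerge F H := by
  obtain ⟨f, hf, hfmem⟩ := (all_card_le_biUnion_card_iff_exists_injective
    fun e : F => {h ∈ H | (e : Finset α).image φ ⊆ h}).1 fun s => by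
      obtain rfl | ⟨e, he⟩ := s.eq_empty_or_nonempty
      · simp
      calc #s ≤ #F := by simpa using card_le_univ s
        _ ≤ _ := hdeg e e.2
        _ ≤ _ := card_le_card (subset_biUnion_of_mem
          (fun e : F => {h ∈ H | (e : Finset α).image φ ⊆ h}) he)
  exact containsBerge_of_injective hφ f hf (fun e => (mem_filter.1 (hfmem e)).1)
    fun e => (mem_filter.1 (hfmem e)).2

theorem exists_offDiag_image_subset_of_not_containsBerge (hH : ¬ ContainsBerge F H) {φ : α → β}
    (hφ : Function.Injective φ) (hcov : ∀ e ∈ F, ∃ h ∈ H, e.image φ ⊆ h) :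
    ∃ p ∈ F.offDiag, ∃ h ∈ H, (p.1 ∪ p.2).image φ ⊆ h := by
  by_contra! hdisj
  choose f hfH hf using fun e : F => hcov e e.2
  refine hH (containsBerge_of_injective hφ f (fun e₁ e₂ he => ?_) hfH hf)
  by_contra hne
  exact hdisj (e₁, e₂) (mem_offDiag.2 ⟨e₁.2, e₂.2, Subtype.coe_ne_coe.2 hne⟩) (f e₁) (hfH e₁)
    (by rw [image_union]; exact union_subset (hf e₁) (he ▸ hf e₂))

theorem exists_subset_card_filter_lt_of_not_containsBerge [Fintype α] {r : ℕ}
    (hF : ∀ e ∈ F, #e = r) (hH : ¬ ContainsBerge F H) {K : Finset β}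
    (hK : Fintype.card α ≤ #K) : ∃ g ⊆ K, #g = r ∧ #{h ∈ H | g ⊆ h} < #F := by
  obtain ⟨ψ⟩ := Function.Embedding.nonempty_of_card_le (β := K) (by simpa using hK)
  have hψ : Function.Injective fun x => (ψ x : β) := Subtype.val_injective.comp ψ.injective
  by_contra! hheavy
  refine hH (containsBerge_of_card_le hψ fun e he => hheavy _ ?_ ?_)
  · intro y hy
    obtain ⟨x, -, rfl⟩ := mem_image.1 hy
    exact (ψ x).2
  · rw [card_image_of_injective _ hψ, hF e he]

theorem sum_choose_card_le_of_not_containsBerge [Fintype α] [Fintype β] {r : ℕ}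
    (hF : ∀ e ∈ F, #e = r) (hH : ¬ ContainsBerge F H)
    (hsize : ∀ h ∈ H, Fintype.card α ≤ #h) :
    ∑ h ∈ H, (#h).choose r ≤ (Fintype.card α).choose r * (#F * (Fintype.card β).choose r) := by
  set L := {g ∈ (univ : Finset β).powersetCard r | #{h ∈ H | g ⊆ h} < #F}
  calc ∑ h ∈ H, (#h).choose r
      ≤ ∑ h ∈ H, (Fintype.card α).choose r * #(L.bipartiteAbove (fun h g => g ⊆ h) h) := by
        refine sum_le_sum fun h hh => ?_
        have hL : L.bipartiteAbove (fun h g => g ⊆ h) h =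
            {g ∈ h.powersetCard r | #{h ∈ H | g ⊆ h} < #F} := by
          ext g
          simp only [bipartiteAbove, L, mem_filter, mem_powersetCard, subset_univ, true_and]
          tauto
        rw [hL]
        exact choose_le_choose_mul_card_filter (hsize h hh) _
          fun K _ hK => exists_subset_card_filter_lt_of_not_containsBerge hF hH hK.ge
    _ = (Fintype.card α).choose r * ∑ g ∈ L, #{h ∈ H | g ⊆ h} := by
        rw [← mul_sum, sum_card_bipartiteAbove_eq_sum_card_bipartiteBelow]
        rfl
    _ ≤ (Fintype.card α).choose r * (#F * (Fintype.card β).choose r) := by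
        gcongr
        calc ∑ g ∈ L, #{h ∈ H | g ⊆ h} ≤ #L * #F :=
              sum_le_card_nsmul _ _ _ fun g hg => (mem_filter.1 hg).2.le
          _ ≤ (Fintype.card β).choose r * #F := by
              gcongr
              simpa using card_le_card (filter_subset _ ((univ : Finset β).powersetCard r))
          _ = _ := mul_comm _ _

theorem card_rShadow_succ_le_of_not_containsBerge [Fintype α] [Fintype β] {r : ℕ}
    (hF : ∀ e ∈ F, #e = r) (hH : ¬ ContainsBerge F H) {δ : ℝ} (hδ : 0 ≤ δ)
    (hsize : ∀ h ∈ H, Fintype.card α ≤ #h ∧ (#h : ℝ) ≤ δ * Fintype.card β) :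
    (#(rShadow (r + 1) H) : ℝ) ≤
      δ * ((Fintype.card α).choose r * #F) * (Fintype.card β : ℝ) ^ (r + 1) := by
  have hsum := sum_choose_card_le_of_not_containsBerge hF hH fun h hh => (hsize h hh).1
  calc (#(rShadow (r + 1) H) : ℝ) ≤ ∑ h ∈ H, ((#h : ℝ) * (#h).choose r) := by
        exact_mod_cast (card_rShadow_le _ H).trans
          (sum_le_sum fun h _ => choose_succ_le_mul_choose #h r)
    _ ≤ ∑ h ∈ H, δ * Fintype.card β * ((#h).choose r : ℝ) :=
        sum_le_sum fun h hh => by gcongr; exact (hsize h hh).2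
    _ ≤ δ * Fintype.card β *
          ((Fintype.card α).choose r * (#F * (Fintype.card β : ℝ) ^ r)) := by
        rw [← mul_sum]
        gcongr
        exact_mod_cast hsum.trans (by gcongr; exact Nat.choose_le_pow _ _)
    _ = _ := by ring

theorem card_filter_forall_mem_eq [Fintype α] [Fintype β] (s : Finset α) (T : Finset β) :
    #{φ : α → β | ∀ x ∈ s, φ x ∈ T} = #T ^ #s * Fintype.card β ^ (Fintype.card α - #s) := by
  have hpi : ({φ : α → β | ∀ x ∈ s, φ x ∈ T} : Finset (α → β)) =
      Fintype.piFinset fun x => if x ∈ s then T else univ := by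
    ext φ
    simp only [mem_filter, mem_univ, true_and, Fintype.mem_piFinset]
    refine ⟨fun h x => ?_, fun h x hx => by simpa [hx] using h x⟩
    split_ifs with hx
    exacts [h x hx, mem_univ _]
  simp only [hpi, Fintype.card_piFinset, apply_ite card, card_univ]
  rw [← prod_mul_prod_compl s, prod_ite_of_true fun _ => id,
    prod_ite_of_false fun _ => mem_compl.1, prod_const, prod_const, card_compl]

theorem card_filter_image_mem_le [Fintype α] [Fintype β] (s : Finset α)
    (G : Finset (Finset β)) {t : ℕ} (hG : ∀ T ∈ G, #T = t) :
    #{φ : α → β | s.image φ ∈ G} ≤ #G * (t ^ #s * Fintype.card β ^ (Fintype.card α - #s)) :=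
  calc #{φ : α → β | s.image φ ∈ G}
      ≤ #(G.biUnion fun T => {φ : α → β | ∀ x ∈ s, φ x ∈ T}) :=
        card_le_card fun φ hφ => by
          rw [mem_filter] at hφ
          exact mem_biUnion.2 ⟨s.image φ, hφ.2,
            mem_filter.2 ⟨mem_univ _, fun _ hx => mem_image_of_mem φ hx⟩⟩
    _ ≤ _ := card_biUnion_le_card_mul _ _ _ fun T hT => by
        rw [card_filter_forall_mem_eq, hG T hT]

theorem card_filter_injective_image_subset_le [Fintype α] [Fintype β] (H : Finset (Finset β))
    {s : Finset α} {t : ℕ} (hts : t ≤ #s) :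
    #{φ : α → β | Function.Injective φ ∧ ∃ h ∈ H, s.image φ ⊆ h} ≤
      #(rShadow t H) * (t ^ t * Fintype.card β ^ (Fintype.card α - t)) := by
  obtain ⟨s₀, hs₀, rfl⟩ := exists_subset_card_eq hts
  refine le_trans (card_le_card fun φ hφ => ?_)
    (card_filter_image_mem_le s₀ _ fun T hT => by
      obtain ⟨-, -, -, hT⟩ := mem_rShadow.1 hT
      exact hT)
  obtain ⟨-, hφ, h, hh, hsub⟩ := mem_filter.1 hφ
  exact mem_filter.2 ⟨mem_univ _, mem_rShadow.2
    ⟨h, hh, (image_subset_image hs₀).trans hsub, card_image_of_injective _ hφ⟩⟩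

theorem copyCount_le_card_filter [Fintype α] [Fintype β] (F : Finset (Finset α))
    (G : Finset (Finset β)) :
    copyCount F G ≤ #{φ : α → β | Function.Injective φ ∧ ∀ e ∈ F, e.image φ ∈ G} := by
  refine le_trans (card_le_card fun G' hG' => ?_)
    (card_image_le (f := fun φ => F.image (·.image φ)))
  obtain ⟨hG'G, φ, hφ, rfl⟩ := mem_filter.1 hG'
  exact mem_image.2 ⟨φ, mem_filter.2 ⟨mem_univ _, hφ,
    fun e he => mem_powerset.1 hG'G (mem_image_of_mem _ he)⟩, rfl⟩

theorem copyCount_rShadow_le_of_not_containsBerge [Fintype α] [Fintype β] {r : ℕ}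
    (hF : ∀ e ∈ F, #e = r) (hH : ¬ ContainsBerge F H) :
    copyCount F (rShadow r H) ≤ #F.offDiag * (#(rShadow (r + 1) H) *
      ((r + 1) ^ (r + 1) * Fintype.card β ^ (Fintype.card α - (r + 1)))) :=
  calc copyCount F (rShadow r H)
      ≤ #{φ : α → β | Function.Injective φ ∧ ∀ e ∈ F, e.image φ ∈ rShadow r H} :=
        copyCount_le_card_filter F _
    _ ≤ #(F.offDiag.biUnion fun p =>
          {φ : α → β | Function.Injective φ ∧ ∃ h ∈ H, (p.1 ∪ p.2).image φ ⊆ h}) :=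
        card_le_card fun φ hφ => by
          obtain ⟨-, hφ, hmem⟩ := mem_filter.1 hφ
          obtain ⟨p, hp, h, hh, hsub⟩ := exists_offDiag_image_subset_of_not_containsBerge hH hφ
            fun e he => (mem_rShadow.1 (hmem e he)).imp fun h ⟨hh, hsub, _⟩ => ⟨hh, hsub⟩
          exact mem_biUnion.2 ⟨p, hp, mem_filter.2 ⟨mem_univ _, hφ, h, hh, hsub⟩⟩
    _ ≤ _ := card_biUnion_le_card_mul _ _ _ fun p hp => by
        obtain ⟨hp₁, hp₂, hne⟩ := mem_offDiag.1 hp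
        exact card_filter_injective_image_subset_le H
          (succ_le_card_union_of_ne (hF _ hp₁) (hF _ hp₂) hne)

end Berge

theorem statement15_general {α : Type*} [Fintype α] [DecidableEq α] (r : ℕ)
    (F : Finset (Finset α)) (hF : ∀ e ∈ F, e.card = r) :
    ∀ ε : ℝ, 0 < ε → ∃ δ : ℝ, 0 < δ ∧ ∃ N : ℕ, ∀ n ≥ N, ∀ H : Finset (Finset (Fin n)),
      ¬ ContainsBerge F H →
      (∀ h ∈ H, Fintype.card α ≤ h.card ∧ (h.card : ℝ) ≤ δ * n) →
      (copyCount F (rShadow r H) : ℝ) ≤ ε * (n : ℝ) ^ (Fintype.card α) := by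
  intro ε hε
  set k := Fintype.card α
  set C : ℕ := #F.offDiag * (r + 1) ^ (r + 1) * (k.choose r * #F)
  set δ : ℝ := ε / (C + 1)
  refine ⟨δ, by positivity, 0, fun n _ H hH hsize => ?_⟩
  have hcount := copyCount_rShadow_le_of_not_containsBerge (β := Fin n) hF hH
  obtain hF₁ | ⟨p, hp⟩ := F.offDiag.eq_empty_or_nonempty
  · have hzero : copyCount F (rShadow r H) = 0 := by simpa [hF₁] using hcount
    rw [hzero, Nat.cast_zero]
    positivity
  obtain ⟨hp₁, hp₂, hne⟩ := mem_offDiag.1 hp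
  have hrk : r + 1 ≤ k :=
    (succ_le_card_union_of_ne (hF _ hp₁) (hF _ hp₂) hne).trans (card_le_univ _)
  have hshadow := card_rShadow_succ_le_of_not_containsBerge (β := Fin n) hF hH
    (by positivity : 0 ≤ δ) (by simpa using hsize)
  have hδC : C * δ ≤ ε := by
    rw [mul_div_assoc', div_le_iff₀ (by positivity)]
    nlinarith
  calc (copyCount F (rShadow r H) : ℝ)
      ≤ #F.offDiag * (#(rShadow (r + 1) H) * ((r + 1) ^ (r + 1) * (n : ℝ) ^ (k - (r + 1)))) := by
        exact_mod_cast (by simpa using hcount)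
    _ ≤ #F.offDiag * (δ * (k.choose r * #F) * (n : ℝ) ^ (r + 1) *
          ((r + 1) ^ (r + 1) * (n : ℝ) ^ (k - (r + 1)))) := by
        gcongr
        simpa using hshadow
    _ = C * δ * ((n : ℝ) ^ (r + 1) * (n : ℝ) ^ (k - (r + 1))) := by
        push_cast [C]
        ring
    _ ≤ ε * (n : ℝ) ^ k := by
        rw [← pow_add, Nat.add_sub_cancel' hrk]
        gcongr

theorem statement15 {α : Type*} [Fintype α] [DecidableEq α] (r : ℕ) (hr : 2 ≤ r)
    (F : Finset (Finset α)) (hF : ∀ e ∈ F, e.card = r) :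
    ∀ ε : ℝ, 0 < ε → ∃ δ : ℝ, 0 < δ ∧ ∃ N : ℕ, ∀ n ≥ N, ∀ H : Finset (Finset (Fin n)),
      ¬ ContainsBerge F H →
      (∀ h ∈ H, Fintype.card α ≤ h.card ∧ (h.card : ℝ) ≤ δ * n) →
      (copyCount F (rShadow r H) : ℝ) ≤ ε * (n : ℝ) ^ (Fintype.card α) :=
  statement15_general r F hF
end
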